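/- arXiv:math/0610524 — 11 statements merged into one kernel-verified Lean document; each statement's English description precedes it below -/
import Mathlib

section
/- Let k be a commutative ring, H a k-bialgebra, A a k-algebra, and ρ : A → A⊗H a k-linear map satisfying (2.1.1) ρ(ab) = ρ(a)ρ(b). Define Δ' : A⊗H → A⊗H⊗H by Δ'(a⊗h) = a1_{[0]} ⊗ h_{(1)}1_{[1]} ⊗ h_{(2)}, the right A-action on A⊗H by (a⊗h)◁b = ab_{[0]} ⊗ hb_{[1]}, and the right A-action on A⊗H⊗H by (a⊗h⊗g)◁b = ab_{[0]} ⊗ hb_{[1]} ⊗ gb_{[2]} (using ρ²(b) = b_{[0]}⊗b_{[1]}⊗b_{[2]}). Then Δ' is right A-linear, i.e. Δ'(ξ◁b) = Δ'(ξ)◁b for all ξ ∈ A⊗H and b ∈ A, if and only if condition (2.2.1) ρ²(a) = a_{[0]}1_{[0]} ⊗ a_{[1](1)}1_{[1]} ⊗ a_{[1](2)} holds for all a ∈ A. -/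
/-! `Δ'` is `ξ ↦ (id ⊗ δ)(ξ) · (ρ(1) ⊗ 1)`, and `id ⊗ δ` is multiplicative. Multiplicativity
of `ρ` makes `ρ(1) ⊗ 1` a left unit on the image of `ρ ⊗ id`, so right linearity at `ξ = 1`
is exactly (2.2.1), and conversely (2.2.1) rewrites `Δ'(ξ ρ(b))` into `Δ'(ξ) ρ²(b)`. -/

open TensorProduct

/-- The map `A ⊗ H → (A ⊗ H) ⊗ H`, `a ⊗ h ↦ (a ⊗ h⁽¹⁾) ⊗ h⁽²⁾`, i.e. `id_A ⊗ δ`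
followed by the inverse associator. -/
noncomputable def coassocMap (k A H : Type*) [CommRing k] [Ring A] [Algebra k A]
    [Ring H] [Bialgebra k H] :
    A ⊗[k] H →ₗ[k] (A ⊗[k] H) ⊗[k] H :=
  (TensorProduct.assoc k A H H).symm.toLinearMap ∘ₗ
    LinearMap.lTensor A (Coalgebra.comul (R := k) (A := H))

noncomputable def coassocAlgHom (k A H : Type*) [CommRing k] [Ring A] [Algebra k A]
    [Ring H] [Bialgebra k H] : A ⊗[k] H →ₐ[k] (A ⊗[k] H) ⊗[k] H :=
  (Algebra.TensorProduct.assoc k k k A H H).symm.toAlgHom.comp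
    (Algebra.TensorProduct.map (AlgHom.id k A) (Bialgebra.comulAlgHom k H))

section

variable {k A H : Type*} [CommRing k] [Ring A] [Algebra k A] [Ring H] [Bialgebra k H]

theorem coassocAlgHom_toLinearMap :
    (coassocAlgHom k A H).toLinearMap = coassocMap k A H :=
  TensorProduct.ext' fun _ _ => rfl

theorem coassocMap_mul (x y : A ⊗[k] H) :
    coassocMap k A H (x * y) = coassocMap k A H x * coassocMap k A H y := by
  simp only [← coassocAlgHom_toLinearMap, AlgHom.toLinearMap_apply, map_mul]

theorem coassocMap_one : coassocMap k A H 1 = 1 := by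
  simp only [← coassocAlgHom_toLinearMap, AlgHom.toLinearMap_apply, map_one]

end

theorem LinearMap.map_one_tmul_one_mul_rTensor {k A B M : Type*} [CommRing k]
    [Ring A] [Algebra k A] [Ring B] [Algebra k B] [Ring M] [Algebra k M] (f : A →ₗ[k] B)
    (hf : ∀ a, f 1 * f a = f a) (x : A ⊗[k] M) :
    (f 1 ⊗ₜ[k] (1 : M)) * f.rTensor M x = f.rTensor M x := by
  induction x using TensorProduct.induction_on with
  | zero => rw [map_zero, mul_zero]
  | tmul a m => rw [rTensor_tmul, Algebra.TensorProduct.tmul_mul_tmul, hf, one_mul]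
  | add x y hx hy => rw [map_add, mul_add, hx, hy]

/-- for `ρ : A → A ⊗ H` multiplicative, the map
`Δ'(a ⊗ h) = a·1₍₀₎ ⊗ h⁽¹⁾·1₍₁₎ ⊗ h⁽²⁾` is right `A`-linear (for the actions
`ξ ◁ b = ξ·ρ(b)` on `A ⊗ H` and `ζ ◁ b = ζ·ρ²(b)` on `A ⊗ H ⊗ H`) if and only if
condition (2.2.1): `ρ² a = a₍₀₎1₍₀₎ ⊗ a₍₁₎⁽¹⁾1₍₁₎ ⊗ a₍₁₎⁽²⁾` holds for all `a`. -/
theorem comul_right_linear_iff (k A H : Type*) [CommRing k] [Ring A] [Algebra k A]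
    [Ring H] [Bialgebra k H] (ρ : A →ₗ[k] A ⊗[k] H)
    (h211 : ∀ a b : A, ρ (a * b) = ρ a * ρ b) :
    (∀ (ξ : A ⊗[k] H) (b : A),
        coassocMap k A H (ξ * ρ b) * (ρ 1 ⊗ₜ[k] (1 : H)) =
          (coassocMap k A H ξ * (ρ 1 ⊗ₜ[k] (1 : H))) * (ρ.rTensor H (ρ b))) ↔
      (∀ a : A, ρ.rTensor H (ρ a) = coassocMap k A H (ρ a) * (ρ 1 ⊗ₜ[k] (1 : H))) := by
  have unit_mul : ∀ x : A ⊗[k] H, (ρ 1 ⊗ₜ[k] (1 : H)) * ρ.rTensor H x = ρ.rTensor H x :=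
    ρ.map_one_tmul_one_mul_rTensor fun a => by rw [← h211, one_mul]
  constructor
  · intro hlin a
    have h := hlin 1 a
    rw [one_mul, coassocMap_one, one_mul, unit_mul] at h
    exact h.symm
  · intro h221 ξ b
    rw [coassocMap_mul, mul_assoc, ← h221, mul_assoc, unit_mul]
end

section
/- Let k be a commutative ring, H a k-bialgebra, A a k-algebra, and ρ : A → A⊗H a k-linear map, with ρ(1_A) = 1_{[0]}⊗1_{[1]} (a second copy written 1_{[0']}⊗1_{[1']}) and ρ²(1_A) = 1_{[0]}⊗1_{[1]}⊗1_{[2]}. Consider the conditions: (2.5.1) ρ(1_A) = ε(1_{[1]})1_{[0]} ⊗ 1_{[2]}; (2.5.2) ρ(1_A) = ε(1_{[1']})1_{[0']}1_{[0]} ⊗ 1_{[1]}; (2.5.3) ρ(1_A) = ε(1_{[1']})1_{[0]}1_{[0']} ⊗ 1_{[1]}. Then: (a) if ρ satisfies (2.2.2) ε(a_{[1]})a_{[0]} = ε(1_{[1]})1_{[0]}a for all a ∈ A, conditions (2.5.1) and (2.5.2) are equivalent; (b) if ρ satisfies (2.2.1) ρ²(a) = a_{[0]}1_{[0]} ⊗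 a_{[1](1)}1_{[1]} ⊗ a_{[1](2)} for all a ∈ A, conditions (2.5.1) and (2.5.3) are equivalent. -/
set_option maxHeartbeats 1000000
set_option synthInstance.maxHeartbeats 400000
set_option maxRecDepth 4000

open TensorProduct

/-- The map `ε' : A ⊗ H → A`, `a ⊗ h ↦ ε(h) a`. -/
noncomputable def counitMap (k A H : Type*) [CommRing k] [Ring A] [Algebra k A]
    [Ring H] [Bialgebra k H] :
    A ⊗[k] H →ₗ[k] A :=
  (TensorProduct.rid k A).toLinearMap ∘ₗ
    LinearMap.lTensor A (Coalgebra.counit (R := k) (A := H))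

lemma counitMap_tmul (k A H : Type*) [CommRing k] [Ring A] [Algebra k A]
    [Ring H] [Bialgebra k H] (a : A) (h : H) :
    counitMap k A H (a ⊗ₜ[k] h) = Coalgebra.counit (R := k) h • a := by
  simp [counitMap]

lemma lem_a (k A H : Type*) [CommRing k] [Ring A] [Algebra k A]
    [Ring H] [Bialgebra k H] (ρ : A →ₗ[k] A ⊗[k] H)
    (h22 : ∀ a : A, counitMap k A H (ρ a) = counitMap k A H (ρ 1) * a)
    (x : A ⊗[k] H) :
    (counitMap k A H).rTensor H (ρ.rTensor H x) =
      (counitMap k A H (ρ 1) ⊗ₜ[k] (1 : H)) * x := by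
  induction x using TensorProduct.induction_on with
  | zero => simp
  | tmul a h =>
      simp [LinearMap.rTensor_tmul, h22 a, Algebra.TensorProduct.tmul_mul_tmul]
  | add x y hx hy => simp [mul_add, hx, hy]

lemma lem_b (k A H : Type*) [CommRing k] [Ring A] [Algebra k A]
    [Ring H] [Bialgebra k H] (x y : A ⊗[k] H) :
    (counitMap k A H).rTensor H (coassocMap k A H x * (y ⊗ₜ[k] (1 : H))) =
      x * (counitMap k A H y ⊗ₜ[k] (1 : H)) := by
  induction x using TensorProduct.induction_on with
  | zero => simp
  | add x₁ x₂ h1 h2 => simp [add_mul, h1, h2]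
  | tmul a h =>
      induction y using TensorProduct.induction_on with
      | zero => simp
      | add y₁ y₂ h1 h2 =>
          simp only [map_add, TensorProduct.add_tmul, mul_add, h1, h2]
      | tmul b g =>
          have hc : coassocMap k A H (a ⊗ₜ[k] h) =
              (TensorProduct.assoc k A H H).symm (a ⊗ₜ[k] Coalgebra.comul (R := k) h) := by
            simp [coassocMap]
          rw [hc]
          have key : ∀ t : H ⊗[k] H,
              (counitMap k A H).rTensor H
                ((TensorProduct.assoc k A H H).symm (a ⊗ₜ[k] t) * ((b ⊗ₜ[k] g) ⊗ₜ[k] (1 : H))) =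
              Coalgebra.counit (R := k) g •
                ((a * b) ⊗ₜ[k]
                  (TensorProduct.lid k H) ((Coalgebra.counit (R := k)).rTensor H t)) := by
            intro t
            induction t using TensorProduct.induction_on with
            | zero =>
                simp only [TensorProduct.tmul_zero, map_zero, zero_mul, smul_zero]
            | add t₁ t₂ ht1 ht2 =>
                simp only [TensorProduct.tmul_add, map_add, add_mul, ht1, ht2, smul_add]
            | tmul u v =>
                rw [TensorProduct.assoc_symm_tmul, Algebra.TensorProduct.tmul_mul_tmul,
                  mul_one, Algebra.TensorProduct.tmul_mul_tmul, LinearMap.rTensor_tmul,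
                  LinearMap.rTensor_tmul, counitMap_tmul, Bialgebra.counit_mul,
                  TensorProduct.lid_tmul]
                rw [TensorProduct.tmul_smul, ← TensorProduct.smul_tmul', smul_smul,
                  mul_comm (Coalgebra.counit (R := k) g)]
          rw [key (Coalgebra.comul (R := k) h), Coalgebra.rTensor_counit_comul,
            TensorProduct.lid_tmul, one_smul, counitMap_tmul,
            Algebra.TensorProduct.tmul_mul_tmul, mul_one, mul_smul_comm,
            TensorProduct.smul_tmul']

/-- (a) assuming (2.2.2), conditions (2.5.1) and (2.5.2) are equivalent;
(b) assuming (2.2.1), conditions (2.5.1) and (2.5.3) are equivalent. -/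
theorem lax_unit_conditions_equiv (k A H : Type*) [CommRing k] [Ring A] [Algebra k A]
    [Ring H] [Bialgebra k H] (ρ : A →ₗ[k] A ⊗[k] H) :
    ((∀ a : A, counitMap k A H (ρ a) = counitMap k A H (ρ 1) * a) →
      ((ρ 1 = (counitMap k A H).rTensor H (ρ.rTensor H (ρ 1))) ↔
        (ρ 1 = (counitMap k A H (ρ 1) ⊗ₜ[k] (1 : H)) * ρ 1))) ∧
    ((∀ a : A, ρ.rTensor H (ρ a) = coassocMap k A H (ρ a) * (ρ 1 ⊗ₜ[k] (1 : H))) →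
      ((ρ 1 = (counitMap k A H).rTensor H (ρ.rTensor H (ρ 1))) ↔
        (ρ 1 = ρ 1 * (counitMap k A H (ρ 1) ⊗ₜ[k] (1 : H))))) := by
  constructor
  · intro h22
    rw [lem_a k A H ρ h22 (ρ 1)]
  · intro h21
    rw [h21 1, lem_b k A H (ρ 1) (ρ 1)]
end

section
/- Let k be a commutative ring, H a k-bialgebra, A a k-algebra, and ρ : A → A⊗H a k-linear map. Then the following are equivalent: (i) ρ satisfies the right lax H-comodule algebra conditions (2.1.1) ρ(ab) = ρ(a)ρ(b), (2.2.1) ρ²(a) = a_{[0]}1_{[0]} ⊗ a_{[1](1)}1_{[1]} ⊗ a_{[1](2)}, (2.2.2) ε(a_{[1]})a_{[0]} = ε(1_{[1]})1_{[0]}a, (2.5.1) ρ(1_A) = ε(1_{[1]})1_{[0]} ⊗ 1_{[2]}, together with (2.6.1) ε(1_{[1]})1_{[0]} = 1_A; (ii) ρ satisfies (2.1.1), (2.2.1), and (2.2.3) ε(a_{[1]})a_{[0]} = a for all a ∈ A. (Either set of conditions defines A as a right partial H-comodule algebra.) -/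
/-!
Condition (2.2.2) together with (2.6.1) is just (2.2.3), and (2.6.1) is (2.2.3) at `a = 1`.
The only real content is that (2.5.1) follows from (2.2.1) at `a = 1`: applying `ε' ⊗ id`,
which is multiplicative since `ε'` is an algebra map, the factor `coassocMap (ρ 1)` returns
`ρ 1` by the counit axiom, and the factor `ρ 1 ⊗ 1` becomes `ε'(ρ 1) ⊗ 1 = 1`.
-/

open TensorProduct

open Coalgebra

theorem LinearMap.rTensor_toLinearMap_mul {k A B C : Type*} [CommRing k] [Ring A] [Algebra k A]
    [Ring B] [Algebra k B] [Ring C] [Algebra k C] (f : A →ₐ[k] B) (x y : A ⊗[k] C) :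
    f.toLinearMap.rTensor C (x * y) = f.toLinearMap.rTensor C x * f.toLinearMap.rTensor C y :=
  map_mul (Algebra.TensorProduct.map f (AlgHom.id k C)) x y

section

variable (k A H : Type*) [CommRing k] [Ring A] [Algebra k A] [Ring H] [Bialgebra k H]

noncomputable def counitMapAlgHom : A ⊗[k] H →ₐ[k] A :=
  (Algebra.TensorProduct.rid k k A).toAlgHom.comp
    (Algebra.TensorProduct.map (AlgHom.id k A) (Bialgebra.counitAlgHom k H))

theorem toLinearMap_counitMapAlgHom :
    (counitMapAlgHom k A H).toLinearMap = counitMap k A H := rfl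

theorem rTensor_counitMap_coassocMap (x : A ⊗[k] H) :
    (counitMap k A H).rTensor H (coassocMap k A H x) = x := by
  induction x using TensorProduct.induction_on with
  | zero => simp
  | add x y hx hy => simp only [map_add, hx, hy]
  | tmul a h =>
    let 𝓡 := ℛ k h
    simp only [coassocMap, counitMap, LinearMap.comp_apply, LinearEquiv.coe_coe,
      LinearMap.lTensor_tmul, ← 𝓡.eq, tmul_sum, map_sum, TensorProduct.assoc_symm_tmul,
      LinearMap.rTensor_tmul, TensorProduct.rid_tmul, smul_tmul]
    rw [← tmul_sum, sum_counit_smul]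

theorem rTensor_counitMap_coassocMap_mul_tmul_one {u : A ⊗[k] H}
    (hu : counitMap k A H u = 1) (x : A ⊗[k] H) :
    (counitMap k A H).rTensor H (coassocMap k A H x * (u ⊗ₜ[k] (1 : H))) = x := by
  rw [← toLinearMap_counitMapAlgHom, LinearMap.rTensor_toLinearMap_mul,
    toLinearMap_counitMapAlgHom, rTensor_counitMap_coassocMap, LinearMap.rTensor_tmul, hu,
    ← Algebra.TensorProduct.one_def, mul_one]

end

/-- `ρ` satisfies the right lax `H`-comodule algebra conditions
(2.1.1), (2.2.1), (2.2.2), (2.5.1) together with (2.6.1) `ε(1₍₁₎)1₍₀₎ = 1` if and only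
if `ρ` satisfies (2.1.1), (2.2.1) and (2.2.3); either set of conditions defines a right
partial `H`-comodule algebra. -/
theorem partial_comodule_algebra_iff (k A H : Type*) [CommRing k] [Ring A] [Algebra k A]
    [Ring H] [Bialgebra k H] (ρ : A →ₗ[k] A ⊗[k] H) :
    ((∀ a b : A, ρ (a * b) = ρ a * ρ b) ∧
     (∀ a : A, ρ.rTensor H (ρ a) = coassocMap k A H (ρ a) * (ρ 1 ⊗ₜ[k] (1 : H))) ∧
     (∀ a : A, counitMap k A H (ρ a) = counitMap k A H (ρ 1) * a) ∧
     (ρ 1 = (counitMap k A H).rTensor H (ρ.rTensor H (ρ 1))) ∧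
     (counitMap k A H (ρ 1) = 1)) ↔
    ((∀ a b : A, ρ (a * b) = ρ a * ρ b) ∧
     (∀ a : A, ρ.rTensor H (ρ a) = coassocMap k A H (ρ a) * (ρ 1 ⊗ₜ[k] (1 : H))) ∧
     (∀ a : A, counitMap k A H (ρ a) = a)) := by
  constructor
  · rintro ⟨hmul, hcoassoc, hcounit, -, hunit⟩
    exact ⟨hmul, hcoassoc, fun a => by rw [hcounit, hunit, one_mul]⟩
  · rintro ⟨hmul, hcoassoc, hcounit⟩
    refine ⟨hmul, hcoassoc, fun a => by rw [hcounit, hcounit, one_mul], ?_, hcounit 1⟩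
    rw [hcoassoc 1, rTensor_counitMap_coassocMap_mul_tmul_one k A H (hcounit 1)]
end

section
/- Let k be a commutative ring, H a k-bialgebra, A a k-algebra, and ρ : A → A⊗H a k-linear map. Then ρ makes A a right H-comodule algebra, i.e. satisfies (2.1.1) ρ(ab) = ρ(a)ρ(b), (2.1.2) ρ(1_A) = 1_A⊗1_H, (2.2.3) ε(a_{[1]})a_{[0]} = a, and (2.3.2) (ρ⊗id_H)∘ρ = (id_A⊗δ)∘ρ, if and only if ρ simultaneously satisfies the right partial H-comodule algebra conditions (2.1.1), (2.2.1) ρ²(a) = a_{[0]}1_{[0]} ⊗ a_{[1](1)}1_{[1]} ⊗ a_{[1](2)}, (2.2.3), and the right weak H-comodule algebra conditions (2.1.1), (2.2.2) ε(a_{[1]})a_{[0]} = ε(1_{[1]})1_{[0]}a, (2.3.1) ρ(1_A) = ε(1_{[1]})1_{[0]}⊗1_H, (2.3.2). -/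
open TensorProduct

/-- `ρ` makes `A` a right `H`-comodule algebra ((2.1.1), (2.1.2), (2.2.3),
(2.3.2)) if and only if it simultaneously satisfies the right partial `H`-comodule algebra
conditions ((2.1.1), (2.2.1), (2.2.3)) and the right weak `H`-comodule algebra conditions
((2.1.1), (2.2.2), (2.3.1), (2.3.2)). -/
theorem comodule_algebra_iff_partial_and_weak (k A H : Type*) [CommRing k] [Ring A]
    [Algebra k A] [Ring H] [Bialgebra k H] (ρ : A →ₗ[k] A ⊗[k] H) :
    ((∀ a b : A, ρ (a * b) = ρ a * ρ b) ∧
     (ρ 1 = (1 : A) ⊗ₜ[k] (1 : H)) ∧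
     (∀ a : A, counitMap k A H (ρ a) = a) ∧
     (∀ a : A, ρ.rTensor H (ρ a) = coassocMap k A H (ρ a))) ↔
    (((∀ a b : A, ρ (a * b) = ρ a * ρ b) ∧
      (∀ a : A, ρ.rTensor H (ρ a) = coassocMap k A H (ρ a) * (ρ 1 ⊗ₜ[k] (1 : H))) ∧
      (∀ a : A, counitMap k A H (ρ a) = a)) ∧
     ((∀ a b : A, ρ (a * b) = ρ a * ρ b) ∧
      (∀ a : A, counitMap k A H (ρ a) = counitMap k A H (ρ 1) * a) ∧
      (ρ 1 = counitMap k A H (ρ 1) ⊗ₜ[k] (1 : H)) ∧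
      (∀ a : A, ρ.rTensor H (ρ a) = coassocMap k A H (ρ a)))) := by
  constructor
  · rintro ⟨h1, h2, h3, h4⟩
    have hc : counitMap k A H (ρ 1) = 1 := h3 1
    refine ⟨⟨h1, ?_, h3⟩, h1, ?_, ?_, h4⟩
    · intro a
      rw [h4, h2, ← Algebra.TensorProduct.one_def, ← Algebra.TensorProduct.one_def, mul_one]
    · intro a; rw [hc, one_mul]; exact h3 a
    · rw [hc]; exact h2
  · rintro ⟨⟨h1, _, h3⟩, _, _, h5, h4⟩
    have hc := h3 1
    rw [hc] at h5
    exact ⟨h1, h5, h3, h4⟩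
end

section
/- Let k be a commutative ring, H a k-bialgebra, A a k-algebra, and κ : H×A → A, (h,a) ↦ h·a, a k-bilinear map satisfying (4.1.0) h·(ab) = (h_{(1)}·a)(h_{(2)}·b) and (4.2.1) h·1_A = ε(h)(1_H·1_A). Then condition (4.1.1) h·(a(g·b)) = (h_{(1)}·a)((h_{(2)}g)·b) holds for all a,b ∈ A and h,g ∈ H if and only if condition (4.2.2) h·(g·a) = (hg)·a holds for all a ∈ A and h,g ∈ H. -/
open TensorProduct

/-- For `f g : H →ₗ[k] A`, the map `h ↦ Σ f(h⁽¹⁾) * g(h⁽²⁾)` (Sweedler notation). -/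
noncomputable def comulLift (k A H : Type*) [CommRing k] [Ring A] [Algebra k A]
    [Ring H] [Bialgebra k H] (f g : H →ₗ[k] A) (h : H) : A :=
  TensorProduct.lift ((LinearMap.mul k A).compl₁₂ f g) (Coalgebra.comul (R := k) h)

lemma comulLift_counit_smulRight (k A H : Type*) [CommRing k] [Ring A] [Algebra k A]
    [Ring H] [Bialgebra k H] (c : A) (G : H →ₗ[k] A) (h : H) :
    comulLift k A H ((Coalgebra.counit (R := k) (A := H)).smulRight c) G h = c * G h := by
  have key : TensorProduct.lift ((LinearMap.mul k A).compl₁₂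
      ((Coalgebra.counit (R := k) (A := H)).smulRight c) G)
      = (LinearMap.mulLeft k c ∘ₗ G) ∘ₗ (TensorProduct.lid k H).toLinearMap
        ∘ₗ (Coalgebra.counit (R := k)).rTensor H := by
    ext x y
    simp [mul_smul_comm, smul_mul_assoc]
  unfold comulLift
  rw [key]
  simp [Coalgebra.rTensor_counit_comul]

/-- if `κ` satisfies (4.1.0) `h·(ab) = (h⁽¹⁾·a)(h⁽²⁾·b)` and (4.2.1)
`h·1 = ε(h)(1_H·1)`, then (4.1.1) `h·(a(g·b)) = (h⁽¹⁾·a)((h⁽²⁾g)·b)` holds iff (4.2.2)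
`h·(g·a) = (hg)·a` holds. -/
theorem weak_assoc_iff (k A H : Type*) [CommRing k] [Ring A] [Algebra k A]
    [Ring H] [Bialgebra k H] (κ : H →ₗ[k] A →ₗ[k] A)
    (h410 : ∀ (h : H) (a b : A), κ h (a * b) = comulLift k A H (κ.flip a) (κ.flip b) h)
    (h421 : ∀ h : H, κ h 1 = Coalgebra.counit (R := k) h • κ 1 1) :
    (∀ (h g : H) (a b : A),
        κ h (a * κ g b) =
          comulLift k A H (κ.flip a) ((κ.flip b) ∘ₗ LinearMap.mulRight k g) h) ↔
      (∀ (h g : H) (a : A), κ h (κ g a) = κ (h * g) a) := by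
  constructor
  · intro h411 h g b
    have hflip1 : κ.flip (1 : A) =
        (Coalgebra.counit (R := k) (A := H)).smulRight (κ 1 1) := by
      ext x; simpa using h421 x
    -- step 1: κ h (κ g b) = κ11 * κ (h*g) b
    have step1 : ∀ (h g : H) (b : A), κ h (κ g b) = κ 1 1 * κ (h * g) b := by
      intro h g b
      have := h411 h g 1 b
      rw [one_mul, hflip1, comulLift_counit_smulRight] at this
      simpa using this
    -- step 2: κ h (κ 1 b) = κ h b
    have step2 : ∀ (h : H) (b : A), κ h (κ 1 b) = κ h b := by
      intro h b
      have e1 := h411 h 1 1 b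
      have e2 := h410 h 1 b
      rw [one_mul] at e1 e2
      have : (κ.flip b) ∘ₗ LinearMap.mulRight k (1 : H) = κ.flip b := by
        ext x; simp
      rw [this] at e1
      rw [e1, ← e2]
    have hk : ∀ (h : H) (b : A), κ 1 1 * κ h b = κ h b := by
      intro h b
      have := step1 h 1 b
      rw [mul_one, step2] at this
      exact this.symm
    rw [step1, hk]
  · intro h422 h g a b
    have : κ.flip (κ g b) = (κ.flip b) ∘ₗ LinearMap.mulRight k g := by
      ext x
      simpa using h422 x g b
    rw [h410 h a (κ g b), this]
end

section
/- Let k be a commutative ring, H a k-bialgebra, A a k-algebra, and κ : H×A → A, (h,a) ↦ h·a, a k-bilinear map satisfying (4.1.0) h·(ab) = (h_{(1)}·a)(h_{(2)}·b) and (4.1.1) h·(a(g·b)) = (h_{(1)}·a)((h_{(2)}g)·b). Then condition (4.4.1) a(h·1_A) = 1_H·(a(h·1_A)) holds for all a ∈ A, h ∈ H if and only if condition (4.4.2) a(h·1_A) = (1_H·a)(h·1_A) holds for all a ∈ A, h ∈ H. -/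
open TensorProduct

/-- if `κ` satisfies (4.1.0) and (4.1.1), then (4.4.1)
`a(h·1) = 1_H·(a(h·1))` holds iff (4.4.2) `a(h·1) = (1_H·a)(h·1)` holds. -/
theorem lax_unit_iff (k A H : Type*) [CommRing k] [Ring A] [Algebra k A]
    [Ring H] [Bialgebra k H] (κ : H →ₗ[k] A →ₗ[k] A)
    (h410 : ∀ (h : H) (a b : A), κ h (a * b) = comulLift k A H (κ.flip a) (κ.flip b) h)
    (h411 : ∀ (h g : H) (a b : A),
      κ h (a * κ g b) = comulLift k A H (κ.flip a) ((κ.flip b) ∘ₗ LinearMap.mulRight k g) h) :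
    (∀ (a : A) (h : H), a * κ h 1 = κ 1 (a * κ h 1)) ↔
      (∀ (a : A) (h : H), a * κ h 1 = κ 1 a * κ h 1) := by
  have key : ∀ (a : A) (h : H), κ 1 (a * κ h 1) = κ 1 a * κ h 1 := by
    intro a h
    rw [h411 1 h a 1]
    simp [comulLift, Bialgebra.comul_one, Algebra.TensorProduct.one_def]
  constructor
  · intro H1 a h; rw [← key]; exact H1 a h
  · intro H2 a h; rw [key]; exact H2 a h
end

section
/- Let k be a commutative ring, H a k-bialgebra, A a k-algebra, and κ : H×A → A, (h,a) ↦ h·a, a k-bilinear map. Then the following are equivalent: (i) κ satisfies the left lax H-module algebra conditions (4.1.0) h·(ab) = (h_{(1)}·a)(h_{(2)}·b), (4.1.1) h·(a(g·b)) = (h_{(1)}·a)((h_{(2)}g)·b), (4.1.3) a(1_H·1_A) = 1_H·a, (4.4.1) a(h·1_A) = 1_H·(a(h·1_A)), together with 1_H·1_A = 1_A; (ii) κ satisfies (4.1.0), (4.1.1), and (4.1.2) 1_H·a = a for all a ∈ A. (Either set of conditions defines A as a left partial H-module algebra.) -/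
open TensorProduct

/-- `κ` satisfies the left lax `H`-module algebra conditions (4.1.0),
(4.1.1), (4.1.3), (4.4.1) together with `1_H·1_A = 1_A` if and only if it satisfies
(4.1.0), (4.1.1) and (4.1.2); either set of conditions defines a left partial
`H`-module algebra. -/
theorem partial_module_algebra_iff (k A H : Type*) [CommRing k] [Ring A] [Algebra k A]
    [Ring H] [Bialgebra k H] (κ : H →ₗ[k] A →ₗ[k] A) :
    ((∀ (h : H) (a b : A), κ h (a * b) = comulLift k A H (κ.flip a) (κ.flip b) h) ∧
     (∀ (h g : H) (a b : A),
        κ h (a * κ g b) =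
          comulLift k A H (κ.flip a) ((κ.flip b) ∘ₗ LinearMap.mulRight k g) h) ∧
     (∀ a : A, a * κ 1 1 = κ 1 a) ∧
     (∀ (a : A) (h : H), a * κ h 1 = κ 1 (a * κ h 1)) ∧
     (κ 1 1 = 1)) ↔
    ((∀ (h : H) (a b : A), κ h (a * b) = comulLift k A H (κ.flip a) (κ.flip b) h) ∧
     (∀ (h g : H) (a b : A),
        κ h (a * κ g b) =
          comulLift k A H (κ.flip a) ((κ.flip b) ∘ₗ LinearMap.mulRight k g) h) ∧
     (∀ a : A, κ 1 a = a)) := by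
  constructor
  · rintro ⟨h0, h1, h3, h4, hu⟩
    refine ⟨h0, h1, fun a => ?_⟩
    rw [← h3 a, hu, mul_one]
  · rintro ⟨h0, h1, h2⟩
    exact ⟨h0, h1, fun a => by rw [h2 1, mul_one, h2 a],
      fun a h => (h2 _).symm, h2 1⟩
end

section
/- Let k be a commutative ring, H a k-bialgebra, A a k-algebra, and κ : H×A → A, (h,a) ↦ h·a, a k-bilinear map. Then A is a left H-module algebra, i.e. κ satisfies (4.1.0) h·(ab) = (h_{(1)}·a)(h_{(2)}·b), (4.1.2) 1_H·a = a, (4.2.2) h·(g·a) = (hg)·a, and (4.3.1) h·1_A = ε(h)1_A, if and only if κ simultaneously satisfies the left weak H-module algebra conditions (4.1.0), (4.1.3) a(1_H·1_A) = 1_H·a, (4.2.1) h·1_A = ε(h)(1_H·1_A), (4.2.2), and the left partial H-module algebra conditions (4.1.0), (4.1.1) h·(a(g·b)) = (h_{(1)}·a)((h_{(2)}g)·b), (4.1.2). -/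
open TensorProduct

/-- `κ` makes `A` a left `H`-module algebra ((4.1.0), (4.1.2), (4.2.2),
(4.3.1)) if and only if it simultaneously satisfies the left weak `H`-module algebra
conditions ((4.1.0), (4.1.3), (4.2.1), (4.2.2)) and the left partial `H`-module algebra
conditions ((4.1.0), (4.1.1), (4.1.2)). -/
theorem module_algebra_iff_weak_and_partial (k A H : Type*) [CommRing k] [Ring A]
    [Algebra k A] [Ring H] [Bialgebra k H] (κ : H →ₗ[k] A →ₗ[k] A) :
    ((∀ (h : H) (a b : A), κ h (a * b) = comulLift k A H (κ.flip a) (κ.flip b) h) ∧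
     (∀ a : A, κ 1 a = a) ∧
     (∀ (h g : H) (a : A), κ h (κ g a) = κ (h * g) a) ∧
     (∀ h : H, κ h 1 = Coalgebra.counit (R := k) h • (1 : A))) ↔
    (((∀ (h : H) (a b : A), κ h (a * b) = comulLift k A H (κ.flip a) (κ.flip b) h) ∧
      (∀ a : A, a * κ 1 1 = κ 1 a) ∧
      (∀ h : H, κ h 1 = Coalgebra.counit (R := k) h • κ 1 1) ∧
      (∀ (h g : H) (a : A), κ h (κ g a) = κ (h * g) a)) ∧
     ((∀ (h : H) (a b : A), κ h (a * b) = comulLift k A H (κ.flip a) (κ.flip b) h) ∧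
      (∀ (h g : H) (a b : A),
        κ h (a * κ g b) =
          comulLift k A H (κ.flip a) ((κ.flip b) ∘ₗ LinearMap.mulRight k g) h) ∧
      (∀ a : A, κ 1 a = a))) := by
  constructor
  · rintro ⟨h410, h412, h422, h431⟩
    have hone : κ 1 (1 : A) = 1 := h412 1
    refine ⟨⟨h410, fun a => by rw [hone, mul_one, h412],
        fun h => by rw [h431, hone], h422⟩, ⟨h410, ?_, h412⟩⟩
    intro h g a b
    rw [h410 h a (κ g b)]
    unfold comulLift
    congr 1
    ext x y
    simp [h422]
  · rintro ⟨⟨h410, _, h421, h422⟩, ⟨_, _, h412⟩⟩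
    have hone : κ 1 (1 : A) = 1 := h412 1
    exact ⟨h410, h412, h422, fun h => by rw [h421, hone]⟩
end

section
/- Let k be a commutative ring, A a k-algebra, and H a k-bialgebra that is finitely generated and projective as a k-module, with dual basis {(h_i, h_i^*)}. For a k-linear map ρ : A → A⊗H, ρ(a) = a_{[0]}⊗a_{[1]}, define ⇀ : H^*×A → A by h^*⇀a = h^*(a_{[1]})a_{[0]} (so that ρ(a) = Σ_i (h_i^*⇀a)⊗h_i). Then ρ makes A a right partial H-comodule algebra, i.e. satisfies (2.1.1) ρ(ab) = ρ(a)ρ(b), (2.2.1) ρ²(a) = a_{[0]}1_{[0]} ⊗ a_{[1](1)}1_{[1]} ⊗ a_{[1](2)}, and (2.2.3) ε(a_{[1]})a_{[0]} = a, if and only if ⇀ makes the opposite algebra A^op a left partial H^{*cop}-module algebra, i.e. for all h^*, g^* ∈ H^* and a,b ∈ A: (P1) h^*⇀(ab) = (h^*_{(1)}⇀a)(h^*_{(2)}⇀b), (P2) h^*⇀((g^*⇀b)a) = ((h^*_{(1)}*g^*)⇀b)(h^*_{(2)}⇀a), and (P3) ε⇀a = a, where * is the convolution product on H^* and h^*_{(1)}⊗h^*_{(2)}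 denotes the element of H^*⊗H^* dual to multiplication of H (h^*(xy) = h^*_{(1)}(x)h^*_{(2)}(y)). -/
open TensorProduct

/-- The convolution product on `H* = Hom_k(H, k)`: `(f * g)(h) = Σ f(h⁽¹⁾) g(h⁽²⁾)`. -/
noncomputable def convMul (k H : Type*) [CommRing k] [Ring H] [Bialgebra k H]
    (f g : H →ₗ[k] k) : H →ₗ[k] k :=
  LinearMap.mul' k k ∘ₗ TensorProduct.map f g ∘ₗ Coalgebra.comul (R := k)

/-- The action `φ ⇀ a = φ(a₍₁₎) a₍₀₎` of `H*` on `A` induced by `ρ : A → A ⊗ H`. -/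
noncomputable def dualHit (k A H : Type*) [CommRing k] [Ring A] [Algebra k A]
    [Ring H] [Bialgebra k H] (ρ : A →ₗ[k] A ⊗[k] H) (φ : H →ₗ[k] k) : A →ₗ[k] A :=
  (TensorProduct.rid k A).toLinearMap ∘ₗ LinearMap.lTensor A φ ∘ₗ ρ

section Aux

variable {k H : Type*} [CommRing k] [Ring H] [Bialgebra k H]

/-- Generic pairing: apply a functional to the right tensor factor. -/
noncomputable def prMap (M : Type*) [AddCommGroup M] [Module k M] (φ : H →ₗ[k] k) :
    M ⊗[k] H →ₗ[k] M :=
  (TensorProduct.rid k M).toLinearMap ∘ₗ LinearMap.lTensor M φ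

variable {M : Type*} [AddCommGroup M] [Module k M]

@[simp] lemma prMap_tmul (φ : H →ₗ[k] k) (m : M) (h : H) :
    prMap M φ (m ⊗ₜ[k] h) = φ h • m := by
  simp [prMap]

/-- Dual basis for a f.g. projective module. -/
lemma exists_dual_basis [Module.Finite k H] [Module.Projective k H] :
    ∃ (n : ℕ) (hb : Fin n → H) (cb : Fin n → (H →ₗ[k] k)),
      ∀ x : H, ∑ j, cb j x • hb j = x := by
  obtain ⟨n, f, g, -, -, hfg⟩ :=
    Module.Finite.exists_comp_eq_id_of_projective k H
  refine ⟨n, fun j => f (Pi.single j 1), fun j => (LinearMap.proj j) ∘ₗ g, fun x => ?_⟩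
  have : ∑ j, (g x j) • f (Pi.single j 1) = f (g x) := by
    simp_rw [← map_smul, ← map_sum, ← Pi.single_smul, smul_eq_mul, mul_one,
      Finset.univ_sum_single]
  simp only [LinearMap.comp_apply, LinearMap.proj_apply]
  rw [this, ← LinearMap.comp_apply, hfg, LinearMap.id_apply]

lemma tensor_eq_dual_sum {n : ℕ} (hb : Fin n → H) (cb : Fin n → (H →ₗ[k] k))
    (hdual : ∀ x : H, ∑ j, cb j x • hb j = x) (v : M ⊗[k] H) :
    v = ∑ j, (prMap M (cb j) v) ⊗ₜ[k] hb j := by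
  induction v using TensorProduct.induction_on with
  | zero => simp
  | tmul m x =>
    simp only [prMap_tmul]
    rw [← hdual x, TensorProduct.tmul_sum]
    simp [TensorProduct.smul_tmul, TensorProduct.tmul_smul, hdual]
  | add s t hs ht =>
    conv_lhs => rw [hs, ht]
    simp [TensorProduct.add_tmul, Finset.sum_add_distrib]

/-- Separation: elements of `M ⊗ H` are determined by pairings with `H*`. -/
lemma prMap_sep {n : ℕ} (hb : Fin n → H) (cb : Fin n → (H →ₗ[k] k))
    (hdual : ∀ x : H, ∑ j, cb j x • hb j = x) (t u : M ⊗[k] H)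
    (h : ∀ φ : H →ₗ[k] k, prMap M φ t = prMap M φ u) : t = u := by
  rw [tensor_eq_dual_sum hb cb hdual t, tensor_eq_dual_sum hb cb hdual u]
  simp_rw [h]

variable {A : Type*} [Ring A] [Algebra k A]

/-- Splitting a functional evaluated on a product of tensors. -/
lemma prMap_mulSplit (φ : H →ₗ[k] k) {n : ℕ} (f g : Fin n → (H →ₗ[k] k))
    (hφ : ∀ x y : H, φ (x * y) = ∑ i, f i x * g i y) (t u : A ⊗[k] H) :
    prMap A φ (t * u) = ∑ i, prMap A (f i) t * prMap A (g i) u := by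
  induction t using TensorProduct.induction_on with
  | zero => simp
  | add s t hs ht => simp [add_mul, hs, ht, Finset.sum_add_distrib]
  | tmul a x =>
    induction u using TensorProduct.induction_on with
    | zero => simp
    | add s t hs ht => simp [mul_add, hs, ht, Finset.sum_add_distrib]
    | tmul b y =>
      simp only [Algebra.TensorProduct.tmul_mul_tmul, prMap_tmul, hφ,
        Finset.sum_smul]
      refine Finset.sum_congr rfl fun i _ => ?_
      rw [smul_mul_smul_comm]

lemma prMap_mul_right (ψ : H →ₗ[k] k) (W : A ⊗[k] H) (X : (A ⊗[k] H) ⊗[k] H) :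
    prMap (A ⊗[k] H) ψ (X * (W ⊗ₜ[k] (1 : H))) = prMap (A ⊗[k] H) ψ X * W := by
  induction X using TensorProduct.induction_on with
  | zero => simp
  | add s t hs ht => simp [add_mul, hs, ht]
  | tmul t y =>
    simp [Algebra.TensorProduct.tmul_mul_tmul, smul_mul_assoc]

lemma rho_prMap (ρ : A →ₗ[k] A ⊗[k] H) (ψ : H →ₗ[k] k) (t : A ⊗[k] H) :
    ρ (prMap A ψ t) = prMap (A ⊗[k] H) ψ (ρ.rTensor H t) := by
  induction t using TensorProduct.induction_on with
  | zero => simp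
  | add s t hs ht => simp [hs, ht]
  | tmul a h => simp

lemma prMap_convMul (f ψ : H →ₗ[k] k) (t : A ⊗[k] H) :
    prMap A (convMul k H f ψ) t =
      prMap A f (prMap (A ⊗[k] H) ψ (coassocMap k A H t)) := by
  induction t using TensorProduct.induction_on with
  | zero => simp only [map_zero]
  | add s t hs ht => simp only [map_add, hs, ht]
  | tmul a h =>
    rw [prMap_tmul]
    have : coassocMap k A H (a ⊗ₜ[k] h) =
        (TensorProduct.assoc k A H H).symm.toLinearMap
          (a ⊗ₜ[k] (Coalgebra.comul (R := k) h)) := by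
      rw [coassocMap, LinearMap.comp_apply, LinearMap.lTensor_tmul]
    rw [this]
    have hconv : convMul k H f ψ h =
        LinearMap.mul' k k (TensorProduct.map f ψ (Coalgebra.comul (R := k) h)) := rfl
    rw [hconv]
    generalize Coalgebra.comul (R := k) h = s
    induction s using TensorProduct.induction_on with
    | zero =>
      simp only [tmul_zero, map_zero, zero_smul]
    | add s t hs ht =>
      simp only [tmul_add, map_add, add_smul, hs, ht]
    | tmul x y =>
      simp only [LinearEquiv.coe_coe, TensorProduct.assoc_symm_tmul, prMap_tmul,
        TensorProduct.map_tmul, LinearMap.mul'_apply, map_smul, smul_eq_mul,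
        smul_smul]
      rw [mul_comm]

/-- Canonical decomposition of `φ ∘ mul` from a dual basis. -/
lemma dual_decomp {n : ℕ} (hb : Fin n → H) (cb : Fin n → (H →ₗ[k] k))
    (hdual : ∀ x : H, ∑ j, cb j x • hb j = x) (φ : H →ₗ[k] k) (x y : H) :
    φ (x * y) = ∑ j, (φ ∘ₗ LinearMap.mulRight k (hb j)) x * cb j y := by
  conv_lhs => rw [← hdual y, Finset.mul_sum, map_sum]
  refine Finset.sum_congr rfl fun j _ => ?_
  simp [mul_smul_comm, mul_comm]

end Aux

section DualHitEq

variable {k A H : Type*} [CommRing k] [Ring A] [Algebra k A] [Ring H] [Bialgebra k H]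

lemma dualHit_eq (ρ : A →ₗ[k] A ⊗[k] H) (φ : H →ₗ[k] k) (a : A) :
    dualHit k A H ρ φ a = prMap A φ (ρ a) := rfl

lemma counitMap_eq (t : A ⊗[k] H) :
    counitMap k A H t = prMap A (Coalgebra.counit (R := k)) t := rfl

end DualHitEq

/-- for `H` finitely generated projective, `ρ` makes `A` a right partial
`H`-comodule algebra ((2.1.1), (2.2.1), (2.2.3)) iff `⇀` makes `Aᵒᵖ` a left partial
`H*ᶜᵒᵖ`-module algebra ((P1), (P2), (P3)); in (P1) and (P2) the Sweedler components
`φ⁽¹⁾ ⊗ φ⁽²⁾` of `φ ∈ H*` are expressed by quantifying over all finite decompositions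
`φ(xy) = Σ fᵢ(x) gᵢ(y)`. -/
theorem partial_comodule_iff_partial_module_dual (k A H : Type*) [CommRing k] [Ring A]
    [Algebra k A] [Ring H] [Bialgebra k H] [Module.Finite k H] [Module.Projective k H]
    (ρ : A →ₗ[k] A ⊗[k] H) :
    ((∀ a b : A, ρ (a * b) = ρ a * ρ b) ∧
     (∀ a : A, ρ.rTensor H (ρ a) = coassocMap k A H (ρ a) * (ρ 1 ⊗ₜ[k] (1 : H))) ∧
     (∀ a : A, counitMap k A H (ρ a) = a)) ↔
    ((∀ (φ : H →ₗ[k] k) (a b : A) (n : ℕ) (f g : Fin n → (H →ₗ[k] k)),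
        (∀ x y : H, φ (x * y) = ∑ i, f i x * g i y) →
        dualHit k A H ρ φ (a * b) = ∑ i, dualHit k A H ρ (f i) a * dualHit k A H ρ (g i) b) ∧
     (∀ (φ ψ : H →ₗ[k] k) (a b : A) (n : ℕ) (f g : Fin n → (H →ₗ[k] k)),
        (∀ x y : H, φ (x * y) = ∑ i, f i x * g i y) →
        dualHit k A H ρ φ (dualHit k A H ρ ψ b * a) =
          ∑ i, dualHit k A H ρ (convMul k H (f i) ψ) b * dualHit k A H ρ (g i) a) ∧
     (∀ a : A, dualHit k A H ρ (Coalgebra.counit (R := k)) a = a)) := by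
  obtain ⟨n0, hb, cb, hdual⟩ := exists_dual_basis (k := k) (H := H)
  constructor
  · rintro ⟨hmul, hco, hcounit⟩
    have hρ1 : ∀ a : A, ρ 1 * ρ a = ρ a := fun a => by rw [← hmul, one_mul]
    refine ⟨?_, ?_, ?_⟩
    · intro φ a b n f g hφ
      simp only [dualHit_eq]
      rw [hmul, prMap_mulSplit φ f g hφ]
    · intro φ ψ a b n f g hφ
      simp only [dualHit_eq]
      rw [hmul, rho_prMap, hco, prMap_mul_right, mul_assoc, hρ1,
        prMap_mulSplit φ f g hφ]
      refine Finset.sum_congr rfl fun i _ => ?_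
      rw [prMap_convMul]
    · intro a
      rw [dualHit_eq, ← counitMap_eq, hcounit]
  · rintro ⟨hP1, hP2, hP3⟩
    have hdec : ∀ (φ : H →ₗ[k] k) (x y : H),
        φ (x * y) = ∑ j, (φ ∘ₗ LinearMap.mulRight k (hb j)) x * cb j y :=
      dual_decomp hb cb hdual
    refine ⟨?_, ?_, ?_⟩
    · intro a b
      refine prMap_sep hb cb hdual _ _ fun φ => ?_
      have h1 := hP1 φ a b n0 (fun j => φ ∘ₗ LinearMap.mulRight k (hb j)) cb (hdec φ)
      simp only [dualHit_eq] at h1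
      rw [h1, prMap_mulSplit φ _ cb (hdec φ)]
    · intro a
      refine prMap_sep hb cb hdual _ _ fun ψ => ?_
      refine prMap_sep hb cb hdual _ _ fun φ => ?_
      have h2 := hP2 φ ψ 1 a n0 (fun j => φ ∘ₗ LinearMap.mulRight k (hb j)) cb (hdec φ)
      rw [mul_one] at h2
      simp only [dualHit_eq] at h2
      rw [← rho_prMap, h2, prMap_mul_right, prMap_mulSplit φ _ cb (hdec φ)]
      refine Finset.sum_congr rfl fun j _ => ?_
      rw [prMap_convMul]
    · intro a
      have := hP3 a
      rw [dualHit_eq, ← counitMap_eq] at this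
      exact this
end

section
/- Let k be a commutative ring, A a k-algebra, and H a k-bialgebra that is finitely generated and projective as a k-module. For a k-linear map ρ : A → A⊗H, ρ(a) = a_{[0]}⊗a_{[1]}, define ⇀ : H^*×A → A by h^*⇀a = h^*(a_{[1]})a_{[0]}. Then ρ makes A a right lax H-comodule algebra, i.e. satisfies (2.1.1) ρ(ab) = ρ(a)ρ(b), (2.2.1) ρ²(a) = a_{[0]}1_{[0]} ⊗ a_{[1](1)}1_{[1]} ⊗ a_{[1](2)}, (2.2.2) ε(a_{[1]})a_{[0]} = ε(1_{[1]})1_{[0]}a, and (2.5.1) ρ(1_A) = ε(1_{[1]})1_{[0]} ⊗ 1_{[2]}, if and only if ⇀ makes A^op a left lax H^{*cop}-module algebra, i.e. for all h^*, g^* ∈ H^* and a,b ∈ A: (L1) h^*⇀(ab) = (h^*_{(1)}⇀a)(h^*_{(2)}⇀b); (L2) h^*⇀((g^*⇀b)a) = ((h^*_{(1)}*g^*)⇀b)(h^*_{(2)}⇀a); (L3) (ε⇀1_A)a = ε⇀a; (L4) (h^*⇀1_A)a = ε⇀((h^*⇀1_A)a), where * is the convolution product on H^* and h^*_{(1)}⊗h^*_{(2)}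 denotes the element of H^*⊗H^* dual to multiplication of H. -/
open TensorProduct

set_option synthInstance.maxHeartbeats 1000000
set_option maxHeartbeats 1000000

section Hit

variable {k : Type*} [CommRing k]

/-- Auxiliary contraction `m ⊗ h ↦ φ(h) • m`. -/
noncomputable def hitAux (k : Type*) [CommRing k] (M : Type*) [AddCommGroup M] [Module k M]
    {H : Type*} [AddCommGroup H] [Module k H] (φ : H →ₗ[k] k) :
    M ⊗[k] H →ₗ[k] M :=
  (TensorProduct.rid k M).toLinearMap ∘ₗ LinearMap.lTensor M φ

variable {H : Type*} [AddCommGroup H] [Module k H]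

@[simp] lemma hitAux_tmul (M : Type*) [AddCommGroup M] [Module k M]
    (φ : H →ₗ[k] k) (m : M) (h : H) :
    hitAux k M φ (m ⊗ₜ[k] h) = φ h • m := by
  simp [hitAux]

lemma hitAux_nat {M N : Type*} [AddCommGroup M] [Module k M] [AddCommGroup N] [Module k N]
    (σ : M →ₗ[k] N) (φ : H →ₗ[k] k) (x : M ⊗[k] H) :
    hitAux k N φ (σ.rTensor H x) = σ (hitAux k M φ x) := by
  induction x using TensorProduct.induction_on with
  | zero => simp
  | tmul m h => simp
  | add x y hx hy => simp [hx, hy]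

end Hit

section DualBasis

variable {k H : Type*} [CommRing k] [AddCommGroup H] [Module k H]
  [Module.Finite k H] [Module.Projective k H]

lemma exists_dualBasis :
    ∃ (n : ℕ) (v : Fin n → H) (p : Fin n → (H →ₗ[k] k)),
      ∀ h : H, ∑ j, p j h • v j = h := by
  obtain ⟨n, f, g, -, -, hfg⟩ := Module.Finite.exists_comp_eq_id_of_projective k H
  refine ⟨n, fun j => f (Pi.single j 1), fun j => LinearMap.proj j ∘ₗ g, fun h => ?_⟩
  have h1 : f (g h) = h := by
    have := congrArg (fun ψ : H →ₗ[k] H => ψ h) hfg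
    simpa using this
  calc ∑ j, (LinearMap.proj j ∘ₗ g) h • f (Pi.single j 1)
      = f (∑ j, Pi.single j (g h j)) := by
        rw [map_sum]
        refine Finset.sum_congr rfl fun j _ => ?_
        rw [← map_smul]
        congr 1
        ext i
        by_cases hij : j = i <;> simp [Pi.single_apply, hij]
    _ = f (g h) := by rw [Finset.univ_sum_single]
    _ = h := h1

lemma hitAux_sep {M : Type*} [AddCommGroup M] [Module k M] {x y : M ⊗[k] H}
    (hxy : ∀ φ : H →ₗ[k] k, hitAux k M φ x = hitAux k M φ y) : x = y := by
  obtain ⟨n, v, p, hb⟩ := exists_dualBasis (k := k) (H := H)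
  have key : ∀ z : M ⊗[k] H, z = ∑ j, hitAux k M (p j) z ⊗ₜ[k] v j := by
    intro z
    induction z using TensorProduct.induction_on with
    | zero => simp
    | tmul m h =>
      simp only [hitAux_tmul]
      calc m ⊗ₜ[k] h = m ⊗ₜ[k] (∑ j, p j h • v j) := by rw [hb h]
        _ = ∑ j, (p j h • m) ⊗ₜ[k] v j := by
            rw [tmul_sum]
            exact Finset.sum_congr rfl fun j _ => (smul_tmul _ _ _).symm
    | add a b ha hb' =>
      calc a + b = (∑ j, hitAux k M (p j) a ⊗ₜ[k] v j) + ∑ j, hitAux k M (p j) b ⊗ₜ[k] v j := by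
            rw [← ha, ← hb']
        _ = ∑ j, (hitAux k M (p j) a + hitAux k M (p j) b) ⊗ₜ[k] v j := by
            rw [← Finset.sum_add_distrib]
            exact Finset.sum_congr rfl fun j _ => (add_tmul _ _ _).symm
        _ = ∑ j, (hitAux k M (p j)) (a + b) ⊗ₜ[k] v j := by simp
  rw [key x, key y]
  exact Finset.sum_congr rfl fun j _ => by rw [hxy]

end DualBasis

section Decomp

variable {k H : Type*} [CommRing k] [Ring H] [Algebra k H]
  [Module.Finite k H] [Module.Projective k H]

lemma exists_decomp (φ : H →ₗ[k] k) :
    ∃ (n : ℕ) (f g : Fin n → (H →ₗ[k] k)),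
      ∀ x y : H, φ (x * y) = ∑ i, f i x * g i y := by
  obtain ⟨n, v, p, hb⟩ := exists_dualBasis (k := k) (H := H)
  refine ⟨n * n, fun i => p (finProdFinEquiv.symm i).1,
    fun i => φ (v (finProdFinEquiv.symm i).1 * v (finProdFinEquiv.symm i).2) •
      p (finProdFinEquiv.symm i).2, fun x y => ?_⟩
  have reindex :
      (∑ i : Fin (n * n),
        p (finProdFinEquiv.symm i).1 x *
          ((φ (v (finProdFinEquiv.symm i).1 * v (finProdFinEquiv.symm i).2) •
            p (finProdFinEquiv.symm i).2) y))
      = ∑ q : Fin n × Fin n, p q.1 x * ((φ (v q.1 * v q.2) • p q.2) y) :=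
    Equiv.sum_comp finProdFinEquiv.symm
      (fun q : Fin n × Fin n => p q.1 x * ((φ (v q.1 * v q.2) • p q.2) y))
  rw [reindex, Fintype.sum_prod_type]
  conv_lhs => rw [← hb x, ← hb y]
  rw [Finset.sum_mul_sum, map_sum]
  refine Finset.sum_congr rfl fun i _ => ?_
  rw [map_sum]
  refine Finset.sum_congr rfl fun j _ => ?_
  rw [smul_mul_assoc, mul_smul_comm, map_smul, map_smul, smul_eq_mul, smul_eq_mul,
    LinearMap.smul_apply, smul_eq_mul]
  ring

end Decomp

section Mul

variable {k A H : Type*} [CommRing k] [Ring A] [Algebra k A] [Ring H] [Bialgebra k H]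

lemma hitAux_mul {n : ℕ} {φ : H →ₗ[k] k} {f g : Fin n → (H →ₗ[k] k)}
    (hφ : ∀ x y : H, φ (x * y) = ∑ i, f i x * g i y) (u v : A ⊗[k] H) :
    hitAux k A φ (u * v) = ∑ i, hitAux k A (f i) u * hitAux k A (g i) v := by
  induction u using TensorProduct.induction_on with
  | zero => simp
  | add u₁ u₂ h₁ h₂ => simp [add_mul, h₁, h₂, Finset.sum_add_distrib]
  | tmul a x =>
    induction v using TensorProduct.induction_on with
    | zero => simp
    | add v₁ v₂ h₁ h₂ => simp [mul_add, h₁, h₂, Finset.sum_add_distrib]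
    | tmul b y =>
      simp only [Algebra.TensorProduct.tmul_mul_tmul, hitAux_tmul, hφ, Finset.sum_smul]
      refine Finset.sum_congr rfl fun i _ => ?_
      rw [smul_mul_assoc, mul_smul_comm, smul_smul]

lemma key1 {n : ℕ} {φ : H →ₗ[k] k} {f g : Fin n → (H →ₗ[k] k)}
    (hφ : ∀ x y : H, φ (x * y) = ∑ i, f i x * g i y) (ψ : H →ₗ[k] k)
    (w u E : A ⊗[k] H) (hE : E * u = u) :
    hitAux k A φ (hitAux k (A ⊗[k] H) ψ (coassocMap k A H w * (E ⊗ₜ[k] (1 : H))) * u)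
      = ∑ i, hitAux k A (convMul k H (f i) ψ) w * hitAux k A (g i) u := by
  induction w using TensorProduct.induction_on with
  | zero => simp
  | add w₁ w₂ h₁ h₂ => simp [map_add, add_mul, h₁, h₂, Finset.sum_add_distrib]
  | tmul b h =>
    have hgen : ∀ c : H ⊗[k] H,
        hitAux k A φ (hitAux k (A ⊗[k] H) ψ
            (((TensorProduct.assoc k A H H).symm (b ⊗ₜ[k] c)) * (E ⊗ₜ[k] (1 : H))) * u)
          = ∑ i, (LinearMap.mul' k k (TensorProduct.map (f i) ψ c)) •
              (b * hitAux k A (g i) u) := by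
      intro c
      induction c using TensorProduct.induction_on with
      | zero => simp
      | add c₁ c₂ hc₁ hc₂ =>
        rw [tmul_add, map_add, add_mul, map_add, add_mul, map_add, hc₁, hc₂,
          ← Finset.sum_add_distrib]
        simp [map_add, add_smul]
      | tmul x y =>
        rw [TensorProduct.assoc_symm_tmul, Algebra.TensorProduct.tmul_mul_tmul, mul_one,
          hitAux_tmul, smul_mul_assoc, map_smul, mul_assoc, hE, hitAux_mul hφ,
          Finset.smul_sum]
        refine Finset.sum_congr rfl fun i _ => ?_
        rw [hitAux_tmul, TensorProduct.map_tmul, LinearMap.mul'_apply, smul_mul_assoc,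
          smul_smul, mul_comm (ψ y) (f i x), mul_smul]
    have := hgen (Coalgebra.comul (R := k) h)
    rw [show coassocMap k A H (b ⊗ₜ[k] h)
        = (TensorProduct.assoc k A H H).symm (b ⊗ₜ[k] Coalgebra.comul (R := k) h) by
      simp [coassocMap], this]
    refine Finset.sum_congr rfl fun i _ => ?_
    have hc : convMul k H (f i) ψ h
        = LinearMap.mul' k k (TensorProduct.map (f i) ψ (Coalgebra.comul (R := k) h)) := by
      simp [convMul]
    rw [hitAux_tmul, hc, smul_mul_assoc]

lemma key2 {n : ℕ} {φ : H →ₗ[k] k} {f g : Fin n → (H →ₗ[k] k)}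
    (hφ : ∀ x y : H, φ (x * y) = ∑ i, f i x * g i y) (ψ : H →ₗ[k] k)
    (w E : A ⊗[k] H) :
    hitAux k A φ (hitAux k (A ⊗[k] H) ψ (coassocMap k A H w * (E ⊗ₜ[k] (1 : H))))
      = ∑ i, hitAux k A (convMul k H (f i) ψ) w * hitAux k A (g i) E := by
  induction w using TensorProduct.induction_on with
  | zero => simp
  | add w₁ w₂ h₁ h₂ => simp [map_add, add_mul, h₁, h₂, Finset.sum_add_distrib]
  | tmul b h =>
    have hgen : ∀ c : H ⊗[k] H,
        hitAux k A φ (hitAux k (A ⊗[k] H) ψ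
            (((TensorProduct.assoc k A H H).symm (b ⊗ₜ[k] c)) * (E ⊗ₜ[k] (1 : H))))
          = ∑ i, (LinearMap.mul' k k (TensorProduct.map (f i) ψ c)) •
              (b * hitAux k A (g i) E) := by
      intro c
      induction c using TensorProduct.induction_on with
      | zero => simp
      | add c₁ c₂ hc₁ hc₂ =>
        rw [tmul_add, map_add, add_mul, map_add, map_add, hc₁, hc₂,
          ← Finset.sum_add_distrib]
        simp [map_add, add_smul]
      | tmul x y =>
        rw [TensorProduct.assoc_symm_tmul, Algebra.TensorProduct.tmul_mul_tmul, mul_one,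
          hitAux_tmul, map_smul, hitAux_mul hφ, Finset.smul_sum]
        refine Finset.sum_congr rfl fun i _ => ?_
        rw [hitAux_tmul, TensorProduct.map_tmul, LinearMap.mul'_apply, smul_mul_assoc,
          smul_smul, mul_comm (ψ y) (f i x), mul_smul]
    have := hgen (Coalgebra.comul (R := k) h)
    rw [show coassocMap k A H (b ⊗ₜ[k] h)
        = (TensorProduct.assoc k A H H).symm (b ⊗ₜ[k] Coalgebra.comul (R := k) h) by
      simp [coassocMap], this]
    refine Finset.sum_congr rfl fun i _ => ?_
    have hc : convMul k H (f i) ψ h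
        = LinearMap.mul' k k (TensorProduct.map (f i) ψ (Coalgebra.comul (R := k) h)) := by
      simp [convMul]
    rw [hitAux_tmul, hc, smul_mul_assoc]

lemma dualHit_eq_hitAux (ρ : A →ₗ[k] A ⊗[k] H) (φ : H →ₗ[k] k) (a : A) :
    dualHit k A H ρ φ a = hitAux k A φ (ρ a) := rfl

lemma counitMap_eq_hitAux (x : A ⊗[k] H) :
    counitMap k A H x = hitAux k A (Coalgebra.counit (R := k)) x := rfl

end Mul

/-- for `H` finitely generated projective, `ρ` makes `A` a right lax
`H`-comodule algebra ((2.1.1), (2.2.1), (2.2.2), (2.5.1)) iff `⇀` makes `Aᵒᵖ` a left lax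
`H*ᶜᵒᵖ`-module algebra ((L1)-(L4)); in (L1) and (L2) the Sweedler components
`φ⁽¹⁾ ⊗ φ⁽²⁾` of `φ ∈ H*` are expressed by quantifying over all finite decompositions
`φ(xy) = Σ fᵢ(x) gᵢ(y)`. -/
theorem lax_comodule_iff_lax_module_dual (k A H : Type*) [CommRing k] [Ring A]
    [Algebra k A] [Ring H] [Bialgebra k H] [Module.Finite k H] [Module.Projective k H]
    (ρ : A →ₗ[k] A ⊗[k] H) :
    ((∀ a b : A, ρ (a * b) = ρ a * ρ b) ∧
     (∀ a : A, ρ.rTensor H (ρ a) = coassocMap k A H (ρ a) * (ρ 1 ⊗ₜ[k] (1 : H))) ∧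
     (∀ a : A, counitMap k A H (ρ a) = counitMap k A H (ρ 1) * a) ∧
     (ρ 1 = (counitMap k A H).rTensor H (ρ.rTensor H (ρ 1)))) ↔
    ((∀ (φ : H →ₗ[k] k) (a b : A) (n : ℕ) (f g : Fin n → (H →ₗ[k] k)),
        (∀ x y : H, φ (x * y) = ∑ i, f i x * g i y) →
        dualHit k A H ρ φ (a * b) = ∑ i, dualHit k A H ρ (f i) a * dualHit k A H ρ (g i) b) ∧
     (∀ (φ ψ : H →ₗ[k] k) (a b : A) (n : ℕ) (f g : Fin n → (H →ₗ[k] k)),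
        (∀ x y : H, φ (x * y) = ∑ i, f i x * g i y) →
        dualHit k A H ρ φ (dualHit k A H ρ ψ b * a) =
          ∑ i, dualHit k A H ρ (convMul k H (f i) ψ) b * dualHit k A H ρ (g i) a) ∧
     (∀ a : A,
        dualHit k A H ρ (Coalgebra.counit (R := k)) 1 * a =
          dualHit k A H ρ (Coalgebra.counit (R := k)) a) ∧
     (∀ (φ : H →ₗ[k] k) (a : A),
        dualHit k A H ρ φ 1 * a =
          dualHit k A H ρ (Coalgebra.counit (R := k)) (dualHit k A H ρ φ 1 * a))) := by
  constructor
  · rintro ⟨h1, h2, h3, h4⟩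
    have h3' : ∀ x : A, dualHit k A H ρ (Coalgebra.counit (R := k)) x
        = dualHit k A H ρ (Coalgebra.counit (R := k)) 1 * x := fun x => h3 x
    refine ⟨?_, ?_, ?_, ?_⟩
    · intro φ a b n f g hφ
      rw [dualHit_eq_hitAux, h1 a b, hitAux_mul hφ]
      rfl
    · intro φ ψ a b n f g hφ
      have hE : ρ 1 * ρ a = ρ a := by rw [← h1, one_mul]
      have hnat : ρ (dualHit k A H ρ ψ b) = hitAux k (A ⊗[k] H) ψ (ρ.rTensor H (ρ b)) :=
        (hitAux_nat (k := k) ρ ψ (ρ b)).symm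
      rw [dualHit_eq_hitAux, h1, hnat, h2 b, key1 hφ ψ (ρ b) (ρ a) (ρ 1) hE]
      rfl
    · intro a
      exact (h3' a).symm
    · intro φ a
      have e5 : dualHit k A H ρ (Coalgebra.counit (R := k)) (dualHit k A H ρ φ 1)
          = dualHit k A H ρ φ 1 := by
        conv_rhs => rw [dualHit_eq_hitAux, h4]
        rw [hitAux_nat (k := k) (counitMap k A H) φ (ρ.rTensor H (ρ 1)),
          hitAux_nat (k := k) ρ φ (ρ 1)]
        rfl
      rw [h3' (dualHit k A H ρ φ 1 * a), ← mul_assoc, ← h3' (dualHit k A H ρ φ 1), e5]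
  · rintro ⟨L1, L2, L3, L4⟩
    refine ⟨?_, ?_, ?_, ?_⟩
    · intro a b
      refine hitAux_sep fun φ => ?_
      obtain ⟨n, f, g, hφ⟩ := exists_decomp (k := k) (H := H) φ
      rw [hitAux_mul hφ]
      exact L1 φ a b n f g hφ
    · intro a
      refine hitAux_sep fun χ => ?_
      refine hitAux_sep fun φ => ?_
      obtain ⟨n, f, g, hφ⟩ := exists_decomp (k := k) (H := H) φ
      rw [hitAux_nat (k := k) ρ χ (ρ a), key2 hφ χ (ρ a) (ρ 1)]
      have := L2 φ χ 1 a n f g hφ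
      rw [mul_one] at this
      exact this
    · intro a
      exact (L3 a).symm
    · refine hitAux_sep fun φ => ?_
      rw [hitAux_nat (k := k) (counitMap k A H) φ (ρ.rTensor H (ρ 1)),
        hitAux_nat (k := k) ρ φ (ρ 1)]
      have := L4 φ 1
      rw [mul_one] at this
      exact this
end

section
/- Let k be a commutative ring, H a k-bialgebra, A a k-algebra, and κ : H×A → A, (h,a) ↦ h·a, a k-bilinear map making A a left partial H-module algebra, i.e. satisfying (4.1.0) h·(ab) = (h_{(1)}·a)(h_{(2)}·b), (4.1.1) h·(a(g·b)) = (h_{(1)}·a)((h_{(2)}g)·b), and (4.1.2) 1_H·a = a. Then for every primitive element x ∈ H (i.e. Δ(x) = x⊗1_H + 1_H⊗x): x·1_A = 0, and x·(h·a) = (xh)·a for all h ∈ H and a ∈ A. Consequently, if H is generated as a k-algebra by its primitive elements (e.g. H = U(L) the universal enveloping algebra of a Lie algebra L), then h·(g·a) = (hg)·a and h·1_A = ε(h)1_A for all h,g ∈ H and a ∈ A, so the partial action is an H-module algebra action in the usual sense. -/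
open TensorProduct

section aux
variable {k A H : Type*} [CommRing k] [Ring A] [Algebra k A] [Ring H] [Bialgebra k H]

lemma comulLift_primitive (f g : H →ₗ[k] A) (x : H)
    (hx : Coalgebra.comul (R := k) x = x ⊗ₜ[k] (1 : H) + (1 : H) ⊗ₜ[k] x) :
    comulLift k A H f g x = f x * g 1 + f 1 * g x := by
  simp [comulLift, hx]

lemma counit_primitive (x : H)
    (hx : Coalgebra.comul (R := k) x = x ⊗ₜ[k] (1 : H) + (1 : H) ⊗ₜ[k] x) :
    Coalgebra.counit (R := k) x = 0 := by
  have h := Coalgebra.rTensor_counit_comul (R := k) x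
  rw [hx] at h
  have h2 := congrArg (TensorProduct.lid k H) h
  simp at h2
  have h3 := congrArg (Coalgebra.counit (R := k)) h2
  simp at h3
  exact h3
end aux

/-- for a left partial `H`-module algebra `A` (conditions (4.1.0), (4.1.1),
(4.1.2)), every primitive element `x ∈ H` satisfies `x·1 = 0` and `x·(h·a) = (xh)·a`;
consequently, if `H` is generated as a `k`-algebra by its primitive elements (e.g. a
universal enveloping algebra), then the partial action is an `H`-module algebra action. -/
theorem partial_action_of_primitively_generated (k A H : Type*) [CommRing k] [Ring A]
    [Algebra k A] [Ring H] [Bialgebra k H] (κ : H →ₗ[k] A →ₗ[k] A)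
    (h410 : ∀ (h : H) (a b : A), κ h (a * b) = comulLift k A H (κ.flip a) (κ.flip b) h)
    (h411 : ∀ (h g : H) (a b : A),
      κ h (a * κ g b) = comulLift k A H (κ.flip a) ((κ.flip b) ∘ₗ LinearMap.mulRight k g) h)
    (h412 : ∀ a : A, κ 1 a = a) :
    (∀ x : H, Coalgebra.comul (R := k) x = x ⊗ₜ[k] (1 : H) + (1 : H) ⊗ₜ[k] x →
      κ x 1 = 0 ∧ ∀ (h : H) (a : A), κ x (κ h a) = κ (x * h) a) ∧
    (Algebra.adjoin k {x : H | Coalgebra.comul (R := k) x = x ⊗ₜ[k] (1 : H) + (1 : H) ⊗ₜ[k] x}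
        = ⊤ →
      (∀ (h g : H) (a : A), κ h (κ g a) = κ (h * g) a) ∧
      (∀ h : H, κ h 1 = Coalgebra.counit (R := k) h • (1 : A))) := by
  have prim : ∀ x : H, Coalgebra.comul (R := k) x = x ⊗ₜ[k] (1 : H) + (1 : H) ⊗ₜ[k] x →
      κ x 1 = 0 ∧ ∀ (h : H) (a : A), κ x (κ h a) = κ (x * h) a := by
    intro x hx
    have h1 : κ x 1 = 0 := by
      have := h410 x 1 1
      rw [comulLift_primitive _ _ _ hx] at this
      simpa [h412] using this
    refine ⟨h1, fun h a => ?_⟩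
    have := h411 x h 1 a
    rw [comulLift_primitive _ _ _ hx] at this
    simpa [h412, h1] using this
  refine ⟨prim, fun hgen => ?_⟩
  have assoc : ∀ (h g : H) (a : A), κ h (κ g a) = κ (h * g) a := by
    intro h
    have hh : h ∈ Algebra.adjoin k
        {x : H | Coalgebra.comul (R := k) x = x ⊗ₜ[k] (1 : H) + (1 : H) ⊗ₜ[k] x} := by
      rw [hgen]; trivial
    induction hh using Algebra.adjoin_induction with
    | mem x hx => exact (prim x hx).2
    | algebraMap r =>
      intro g a
      rw [Algebra.algebraMap_eq_smul_one, smul_mul_assoc]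
      simp [h412]
    | add x y hx hy ihx ihy =>
      intro g a
      simp [add_mul, ihx g a, ihy g a]
    | mul x y hx hy ihx ihy =>
      intro g a
      rw [mul_assoc, ← ihx (y * g) a, ← ihy g a, ihx y (κ g a)]
  refine ⟨assoc, fun h => ?_⟩
  have hh : h ∈ Algebra.adjoin k
      {x : H | Coalgebra.comul (R := k) x = x ⊗ₜ[k] (1 : H) + (1 : H) ⊗ₜ[k] x} := by
    rw [hgen]; trivial
  induction hh using Algebra.adjoin_induction with
  | mem x hx => rw [(prim x hx).1, counit_primitive x hx, zero_smul]
  | algebraMap r =>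
    rw [Algebra.algebraMap_eq_smul_one]
    simp [h412]
  | add x y hx hy ihx ihy => simp [ihx, ihy, add_smul]
  | mul x y hx hy ihx ihy =>
    rw [← assoc x y 1, ihy, map_smul, ihx]
    simp [Bialgebra.counit_mul, smul_smul, mul_comm]
end
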